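/- Let 𝒜 be a unital ∗-algebra over ℂ and let Φ : 𝒜 → 𝒜 be a nonlinear ⋄-derivation that is additive (Φ(X + Y) = Φ(X) + Φ(Y) for all X, Y ∈ 𝒜) and satisfies Φ(X*) = Φ(X)* and Φ(iX) = iΦ(X) for all X ∈ 𝒜. Then Φ is a derivation: Φ(AB) = Φ(A)B + AΦ(B) for all A, B ∈ 𝒜. -/

import Mathlib

/-!
Write `T = AB` and `D = Φ(A)B + AΦ(B)`. The `⋄`-derivation identity for the pair `(A*, B)`,
read through `Φ(X*) = Φ(X)*`, says that `Φ` maps the skew-hermitian part `T - T*` to `D - D*`.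
Replacing `A` by `iA` turns `T - T*` into `i(T + T*)` and `D - D*` into `i(D + D*)`, so
`Φ(T + T*) = D + D*` as well. Adding the two and using additivity gives `2Φ(T) = 2D`.
-/

def diamond {R : Type*} [Ring R] [StarRing R] (A B : R) : R := star A * B - star B * A

local infixl:70 " ⋄ " => diamond

section

variable {R : Type*} [Ring R] [StarRing R] {Φ : R → R}

theorem map_mul_sub_star_mul_of_diamond
    (hΦ : ∀ A B : R, Φ (A ⋄ B) = Φ A ⋄ B + A ⋄ Φ B)
    (hstar : ∀ X : R, Φ (star X) = star (Φ X)) (A B : R) :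
    Φ (A * B - star (A * B)) =
      (Φ A * B + A * Φ B) - star (Φ A * B + A * Φ B) := by
  have h := hΦ (star A) B
  simp only [diamond, star_star, hstar] at h
  rw [star_mul, h, star_add, star_mul, star_mul]
  abel

end

section

variable {R : Type*} [Ring R] [Algebra ℂ R] [StarRing R] [StarModule ℂ R] {Φ : R → R}

theorem map_mul_add_star_mul_of_diamond
    (hΦ : ∀ A B : R, Φ (A ⋄ B) = Φ A ⋄ B + A ⋄ Φ B)
    (hstar : ∀ X : R, Φ (star X) = star (Φ X))
    (hi : ∀ X : R, Φ (Complex.I • X) = Complex.I • Φ X) (A B : R) :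
    Φ (A * B + star (A * B)) =
      (Φ A * B + A * Φ B) + star (Φ A * B + A * Φ B) := by
  have h := map_mul_sub_star_mul_of_diamond hΦ hstar (Complex.I • A) B
  have hskew_I : ∀ X : R, Complex.I • X - star (Complex.I • X) = Complex.I • (X + star X) := by
    intro X
    rw [star_smul, Complex.star_def, Complex.conj_I, smul_add, neg_smul, sub_neg_eq_add]
  simp only [hi, smul_mul_assoc, ← smul_add, hskew_I] at h
  exact smul_right_injective R Complex.I_ne_zero h

end

/-- If `Φ` is an additive nonlinear `⋄`-derivation on a unital
∗-algebra over `ℂ` preserving the star operation and satisfying `Φ(iX) = iΦ(X)`,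
then `Φ` is a derivation: `Φ(AB) = Φ(A)B + AΦ(B)`. -/
theorem stmt16 {𝒜 : Type*} [Ring 𝒜] [Algebra ℂ 𝒜] [StarRing 𝒜] [StarModule ℂ 𝒜]
    (Φ : 𝒜 → 𝒜)
    (hΦ : ∀ A B : 𝒜, Φ (star A * B - star B * A) =
      (star (Φ A) * B - star B * Φ A) + (star A * Φ B - star (Φ B) * A))
    (hadd : ∀ X Y : 𝒜, Φ (X + Y) = Φ X + Φ Y)
    (hstar : ∀ X : 𝒜, Φ (star X) = star (Φ X))
    (hi : ∀ X : 𝒜, Φ (Complex.I • X) = Complex.I • Φ X) :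
    ∀ A B : 𝒜, Φ (A * B) = Φ A * B + A * Φ B := by
  intro A B
  have hskew := map_mul_sub_star_mul_of_diamond hΦ hstar A B
  have hherm := map_mul_add_star_mul_of_diamond hΦ hstar hi A B
  generalize A * B = T, Φ A * B + A * Φ B = D at hskew hherm ⊢
  have htwo : (2 : ℂ) • Φ T = (2 : ℂ) • D := by
    rw [two_smul, two_smul, ← hadd, ← add_add_sub_cancel T T (star T), hadd, hherm, hskew]
    abel
  exact smul_right_injective 𝒜 two_ne_zero htwo
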